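/- For an (n,k)-PMD X with no δ₁-exceptional components (all terms in group t), the logarithm of its Fourier transform admits the expansion: X̂(ξ) = e(n ξ_k) · exp(−Σ_{m ∈ ℤ_{≥0}^{k−1}, m ≠ 0} binom(|m|₁, m)·(1/|m|₁)·M_m(X)·∏_{j=1}^{k−1}(1 − e(ξ_j − ξ_k))^{m_j}), valid whenever the inner series converges absolutely (in particular when Σ_j |1 − e(ξ_j − ξ_k)|·p_{i,j} < 1 for all i). -/

import Mathlib

/-!
Write `z_i = Σ_{j<k} p_{i,j} (1 - e(ξ_j - ξ_k))`, so that `Σ_j e(ξ_j) p_{i,j} = e(ξ_k) (1 - z_i)`.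
By the multinomial theorem, grouping the indices `m` by `|m|₁ = ℓ` turns the series
`Σ_m binom(|m|₁, m) |m|₁⁻¹ ∏_j (p_{i,j}(1 - e(ξ_j - ξ_k)))^{m_j}` into the Taylor series
`Σ_ℓ z_i^ℓ / ℓ = -log (1 - z_i)`. Absolute convergence is what makes the regrouping legitimate,
and it forces `Σ_j |p_{i,j}(1 - e(ξ_j - ξ_k))| < 1` (otherwise the regrouped series of absolute
values would dominate the harmonic series), so `|z_i| < 1`. Since `M_m(X)` is a sum over `i`, the
series in the statement is the sum over `i` of these series, and exponentiating gives
`∏_i (1 - z_i)`.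
-/
open Finset

/-- `e(x) = exp(−2πi x)`. -/
noncomputable def eFn (x : ℝ) : ℂ := Complex.exp (-(2 * Real.pi * Complex.I) * x)

/-- The term of index `m ∈ ℤ_{≥0}^{k−1}` in the expansion of the log of the Fourier
transform of an `(n,k)`-PMD with parameters `p` at frequency `ξ`:
`binom(|m|₁, m)·(1/|m|₁)·M_m(X)·Π_{j<k}(1 − e(ξ_j − ξ_k))^{m_j}`, where
`M_m(X) = Σ_i Π_{j<k} p_{i,j}^{m_j}`.  (The `m = 0` term is `0` since `(1/0 : ℂ) = 0`.) -/
noncomputable def momentTerm (n k : ℕ) (p : Fin n → Fin k → ℝ) (ξ : Fin k → ℝ)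
    (last : Fin k) (m : Fin (k - 1) → ℕ) : ℂ :=
  (Nat.multinomial Finset.univ m : ℂ) * ((∑ j, m j : ℕ) : ℂ)⁻¹ *
    (∑ i, ∏ j, ((p i (Fin.castLE (Nat.sub_le k 1) j) : ℝ) : ℂ) ^ m j) *
    ∏ j, (1 - eFn (ξ (Fin.castLE (Nat.sub_le k 1) j) - ξ last)) ^ m j

lemma HasSum.sum_piAntidiag {κ E : Type*} [Fintype κ] [DecidableEq κ] [AddCommGroup E]
    [UniformSpace E] [IsUniformAddGroup E] [CompleteSpace E] [T3Space E]
    {f : (κ → ℕ) → E} {a : E} (hf : HasSum f a) :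
    HasSum (fun ℓ ↦ ∑ m ∈ piAntidiag univ ℓ, f m) a := by
  convert hf.tsum_fiberwise (fun m ↦ ∑ j, m j) using 2 with ℓ
  have : (fun m : κ → ℕ ↦ ∑ j, m j) ⁻¹' {ℓ} = (piAntidiag univ ℓ : Finset (κ → ℕ)) := by
    ext m; simp [mem_piAntidiag]
  rw [this, Finset.tsum_subtype']

noncomputable def logSeriesTerm {R κ : Type*} [Semifield R] [Fintype κ] (v : κ → R)
    (m : κ → ℕ) : R :=
  Nat.multinomial univ m * ((∑ j, m j : ℕ) : R)⁻¹ * ∏ j, v j ^ m j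

section logSeriesTerm

variable {κ : Type*} [Fintype κ]

lemma sum_piAntidiag_logSeriesTerm {R : Type*} [Semifield R] [DecidableEq κ] (v : κ → R)
    (ℓ : ℕ) : ∑ m ∈ piAntidiag univ ℓ, logSeriesTerm v m = (ℓ : R)⁻¹ * (∑ j, v j) ^ ℓ := by
  rw [sum_pow_eq_sum_piAntidiag, mul_sum]
  refine sum_congr rfl fun m hm ↦ ?_
  rw [logSeriesTerm, (mem_piAntidiag.1 hm).1]
  ring

lemma logSeriesTerm_nonneg {v : κ → ℝ} (hv : ∀ j, 0 ≤ v j) (m : κ → ℕ) :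
    0 ≤ logSeriesTerm v m := by
  unfold logSeriesTerm
  exact mul_nonneg (by positivity) (prod_nonneg fun j _ ↦ pow_nonneg (hv j) _)

lemma norm_logSeriesTerm (c : κ → ℂ) (m : κ → ℕ) :
    ‖logSeriesTerm c m‖ = logSeriesTerm (‖c ·‖) m := by
  simp only [logSeriesTerm, norm_mul, norm_inv, norm_prod, norm_pow, Complex.norm_natCast]

lemma logSeriesTerm_ofReal_mul (a : κ → ℝ) (b : κ → ℂ) (m : κ → ℕ) :
    logSeriesTerm (fun j ↦ (a j : ℂ) * b j) m = logSeriesTerm a m * ∏ j, b j ^ m j := by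
  simp only [logSeriesTerm, mul_pow, prod_mul_distrib]
  push_cast
  ring

lemma sum_lt_one_of_summable_logSeriesTerm {v : κ → ℝ}
    (hs : Summable (logSeriesTerm v)) : ∑ j, v j < 1 := by
  classical
  by_contra! h
  refine Real.not_summable_natCast_inv (hs.hasSum.sum_piAntidiag.summable.of_nonneg_of_le
    (fun ℓ ↦ by positivity) fun ℓ ↦ ?_)
  rw [sum_piAntidiag_logSeriesTerm]
  exact le_mul_of_one_le_right (by positivity) (one_le_pow₀ h)

lemma norm_sum_lt_one_of_summable_norm_logSeriesTerm {c : κ → ℂ}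
    (hs : Summable (‖logSeriesTerm c ·‖)) : ‖∑ j, c j‖ < 1 :=
  (norm_sum_le _ _).trans_lt <| sum_lt_one_of_summable_logSeriesTerm <| by
    simpa only [norm_logSeriesTerm] using hs

lemma hasSum_logSeriesTerm {c : κ → ℂ} (hs : Summable (‖logSeriesTerm c ·‖)) :
    HasSum (logSeriesTerm c) (-Complex.log (1 - ∑ j, c j)) := by
  classical
  have hgrouped := hs.of_norm.hasSum.sum_piAntidiag
  simp_rw [sum_piAntidiag_logSeriesTerm] at hgrouped
  have hlog := Complex.hasSum_taylorSeries_neg_log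
    (norm_sum_lt_one_of_summable_norm_logSeriesTerm hs)
  simp_rw [div_eq_inv_mul] at hlog
  rw [← hgrouped.unique hlog]
  exact hs.of_norm.hasSum

lemma exp_neg_tsum_logSeriesTerm {c : κ → ℂ} (hs : Summable (‖logSeriesTerm c ·‖)) :
    Complex.exp (-∑' m, logSeriesTerm c m) = 1 - ∑ j, c j := by
  have hne : 1 - ∑ j, c j ≠ 0 := fun h ↦ by
    simpa [← sub_eq_zero.1 h] using norm_sum_lt_one_of_summable_norm_logSeriesTerm hs
  rw [(hasSum_logSeriesTerm hs).tsum_eq, neg_neg, Complex.exp_log hne]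

end logSeriesTerm

lemma eFn_add (x y : ℝ) : eFn (x + y) = eFn x * eFn y := by
  rw [eFn, eFn, eFn, ← Complex.exp_add]
  push_cast
  ring_nf

lemma eFn_nat_mul (n : ℕ) (x : ℝ) : eFn (n * x) = eFn x ^ n := by
  rw [eFn, eFn, ← Complex.exp_nat_mul]
  push_cast
  ring_nf

lemma eFn_zero : eFn 0 = 1 := by simp [eFn]

section PMD

variable {n k : ℕ}

noncomputable def fourierWeight (p : Fin n → Fin k → ℝ) (ξ : Fin k → ℝ) (last : Fin k)
    (i : Fin n) (j : Fin (k - 1)) : ℂ :=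
  p i (Fin.castLE (Nat.sub_le k 1) j) * (1 - eFn (ξ (Fin.castLE (Nat.sub_le k 1) j) - ξ last))

lemma logSeriesTerm_fourierWeight (p : Fin n → Fin k → ℝ) (ξ : Fin k → ℝ) (last : Fin k)
    (i : Fin n) (m : Fin (k - 1) → ℕ) :
    logSeriesTerm (fourierWeight p ξ last i) m
      = logSeriesTerm (fun j ↦ p i (Fin.castLE (Nat.sub_le k 1) j)) m *
        ∏ j, (1 - eFn (ξ (Fin.castLE (Nat.sub_le k 1) j) - ξ last)) ^ m j :=
  logSeriesTerm_ofReal_mul _ _ m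

lemma momentTerm_eq_sum_logSeriesTerm (p : Fin n → Fin k → ℝ) (ξ : Fin k → ℝ) (last : Fin k)
    (m : Fin (k - 1) → ℕ) :
    momentTerm n k p ξ last m = ∑ i, logSeriesTerm (fourierWeight p ξ last i) m := by
  rw [sum_congr rfl fun i _ ↦ logSeriesTerm_fourierWeight p ξ last i m, ← sum_mul, momentTerm]
  simp only [logSeriesTerm, mul_sum]
  push_cast
  rfl

lemma norm_logSeriesTerm_fourierWeight_le {p : Fin n → Fin k → ℝ} (hp0 : ∀ i j, 0 ≤ p i j)
    (ξ : Fin k → ℝ) (last : Fin k) (i : Fin n) (m : Fin (k - 1) → ℕ) :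
    ‖logSeriesTerm (fourierWeight p ξ last i) m‖ ≤ ‖momentTerm n k p ξ last m‖ := by
  have hnonneg : ∀ i, 0 ≤ logSeriesTerm (fun j ↦ p i (Fin.castLE (Nat.sub_le k 1) j)) m :=
    fun i ↦ logSeriesTerm_nonneg (fun j ↦ hp0 i _) m
  simp only [momentTerm_eq_sum_logSeriesTerm, logSeriesTerm_fourierWeight, ← sum_mul, norm_mul,
    ← Complex.ofReal_sum, Complex.norm_real, Real.norm_of_nonneg (hnonneg _),
    Real.norm_of_nonneg (sum_nonneg fun i _ ↦ hnonneg i)]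
  gcongr
  exact single_le_sum (fun i _ ↦ hnonneg i) (mem_univ i)

lemma sum_eFn_mul_eq {p : Fin n → Fin (k + 1) → ℝ} (i : Fin n) (hsum : ∑ j, p i j = 1)
    (ξ : Fin (k + 1) → ℝ) :
    ∑ j, eFn (ξ j) * p i j
      = eFn (ξ (Fin.last k)) * (1 - ∑ j, fourierWeight p ξ (Fin.last k) i j) := by
  have hterm : ∀ j, eFn (ξ j) * p i j
      = eFn (ξ (Fin.last k)) * (p i j - p i j * (1 - eFn (ξ j - ξ (Fin.last k)))) := by
    intro j
    rw [← add_sub_cancel (ξ (Fin.last k)) (ξ j), eFn_add, add_sub_cancel_left]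
    ring
  rw [sum_congr rfl fun j _ ↦ hterm j, ← mul_sum, sum_sub_distrib, ← Complex.ofReal_sum, hsum,
    Complex.ofReal_one, Fin.sum_univ_castSucc, sub_self, eFn_zero, sub_self, mul_zero, add_zero]
  rfl

end PMD

/-- For an `(n,k)`-PMD `X` with `p_{i,j} = Pr[X_i = e_j]`, the Fourier transform
`X̂(ξ) = Π_i Σ_j e(ξ_j) p_{i,j}` admits the expansion
`X̂(ξ) = e(n ξ_k)·exp(−Σ_{m ≠ 0} binom(|m|₁,m)·(1/|m|₁)·M_m(X)·Π_j (1−e(ξ_j−ξ_k))^{m_j})`,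
valid whenever the inner series converges absolutely. -/
theorem stmt13 (n k : ℕ) (hk : 0 < k) (p : Fin n → Fin k → ℝ)
    (hp0 : ∀ i j, 0 ≤ p i j) (hsum : ∀ i, ∑ j, p i j = 1)
    (ξ : Fin k → ℝ)
    (hconv : Summable (fun m : Fin (k - 1) → ℕ =>
      ‖momentTerm n k p ξ ⟨k - 1, by omega⟩ m‖)) :
    ∏ i, ∑ j, eFn (ξ j) * (p i j : ℂ)
      = eFn (n * ξ ⟨k - 1, by omega⟩) *
        Complex.exp (-(∑' m : Fin (k - 1) → ℕ, momentTerm n k p ξ ⟨k - 1, by omega⟩ m)) := by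
  obtain ⟨k, rfl⟩ : ∃ k', k = k' + 1 := ⟨k - 1, by omega⟩
  set w := fourierWeight p ξ (Fin.last k)
  have hw : ∀ i, Summable (‖logSeriesTerm (w i) ·‖) := fun i ↦
    hconv.of_nonneg_of_le (fun _ ↦ norm_nonneg _) (norm_logSeriesTerm_fourierWeight_le hp0 ξ _ i)
  have htsum :
      ∑' m, momentTerm n (k + 1) p ξ (Fin.last k) m = ∑ i, ∑' m, logSeriesTerm (w i) m := by
    rw [tsum_congr (momentTerm_eq_sum_logSeriesTerm p ξ _),
      Summable.tsum_finsetSum fun i _ ↦ (hw i).of_norm]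
  calc ∏ i, ∑ j, eFn (ξ j) * p i j
      = ∏ i, eFn (ξ (Fin.last k)) * (1 - ∑ j, w i j) :=
        prod_congr rfl fun i _ ↦ sum_eFn_mul_eq i (hsum i) ξ
    _ = eFn (ξ (Fin.last k)) ^ n * ∏ i, Complex.exp (-∑' m, logSeriesTerm (w i) m) := by
        simp only [prod_mul_distrib, prod_const, card_univ, Fintype.card_fin,
          exp_neg_tsum_logSeriesTerm (hw _)]
    _ = _ := by
        rw [eFn_nat_mul, ← Complex.exp_sum, sum_neg_distrib, ← htsum]
        rfl
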